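/- arXiv:2007.03807 — 4 statements merged into one kernel-verified Lean document; each statement's English description precedes it below -/
import Mathlib

section
/- If π is greedy with respect to Q, then component-wise Q* − Q^π ≤ γPΠ^{π*}(Q* − Q^π) + (γPΠ^{π*} − γPΠ^π)(Q^π − Q), where Q* is the optimal action-value function and π* an optimal policy. -/
/-!
Write `M_σ = PΠ^σ`. Subtracting the fixed-point equations of `Q*` and `Q^π` gives the identity
`Q* − Q^π = γM_{π*}(Q* − Q^π) + (γM_{π*} − γM_π)(Q^π − Q) + γ(M_{π*} − M_π)Q`,
and the last term is nonpositive: `(M_σ Q)(s, a)` averages, over next states `s'`, the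
`σ(s')`-average of `Q(s', ·)`, which never exceeds `max Q(s', ·)` and equals it for the greedy `π`.
-/

open Finset Matrix

section WeightedAverage

variable {ι R : Type*} [Semiring R] [LinearOrder R] {s : Finset ι} {w f : ι → R}

theorem sum_mul_le_sup'_of_sum_eq_one [IsOrderedRing R] (hs : s.Nonempty)
    (hw0 : ∀ i ∈ s, 0 ≤ w i) (hw1 : ∑ i ∈ s, w i = 1) :
    ∑ i ∈ s, w i * f i ≤ s.sup' hs f :=
  calc ∑ i ∈ s, w i * f i ≤ ∑ i ∈ s, w i * s.sup' hs f :=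
        sum_le_sum fun i hi => mul_le_mul_of_nonneg_left (le_sup' f hi) (hw0 i hi)
    _ = s.sup' hs f := by rw [← sum_mul, hw1, one_mul]

theorem sum_mul_eq_sup'_of_sum_eq_one (hs : s.Nonempty)
    (hw0 : ∀ i ∈ s, 0 ≤ w i) (hw1 : ∑ i ∈ s, w i = 1)
    (hmax : ∀ i ∈ s, 0 < w i → f i = s.sup' hs f) :
    ∑ i ∈ s, w i * f i = s.sup' hs f :=
  calc ∑ i ∈ s, w i * f i = ∑ i ∈ s, w i * s.sup' hs f := by
        refine sum_congr rfl fun i hi => ?_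
        rcases (hw0 i hi).lt_or_eq with hpos | hzero
        · rw [hmax i hi hpos]
        · rw [← hzero, zero_mul, zero_mul]
    _ = s.sup' hs f := by rw [← sum_mul, hw1, one_mul]

end WeightedAverage

section StateAction

variable {S A : Type*} [Fintype S] [Fintype A]

/-- The paper's `PΠ^σ`. -/
def stateActionMatrix (P : S → A → S → ℝ) (σ : S → A → ℝ) : Matrix (S × A) (S × A) ℝ :=
  fun p q => P p.1 p.2 q.1 * σ q.1 q.2

theorem stateActionMatrix_mulVec_apply (P : S → A → S → ℝ) (σ : S → A → ℝ) (Q : S × A → ℝ)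
    (p : S × A) :
    (stateActionMatrix P σ *ᵥ Q) p = ∑ s', P p.1 p.2 s' * ∑ a, σ s' a * Q (s', a) := by
  simp only [mulVec, dotProduct, stateActionMatrix, Fintype.sum_prod_type, mul_sum, mul_assoc]

theorem stateActionMatrix_mulVec_le_of_greedy [Nonempty A] {P : S → A → S → ℝ}
    (hP0 : ∀ s a s', 0 ≤ P s a s') {π σ : S → A → ℝ} {Q : S × A → ℝ}
    (hπ0 : ∀ s a, 0 ≤ π s a) (hπ1 : ∀ s, ∑ a, π s a = 1)
    (hσ0 : ∀ s a, 0 ≤ σ s a) (hσ1 : ∀ s, ∑ a, σ s a = 1)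
    (hgreedy : ∀ s a, 0 < π s a → Q (s, a) = univ.sup' univ_nonempty fun a' => Q (s, a')) :
    stateActionMatrix P σ *ᵥ Q ≤ stateActionMatrix P π *ᵥ Q := by
  intro p
  simp only [stateActionMatrix_mulVec_apply]
  refine sum_le_sum fun s' _ => mul_le_mul_of_nonneg_left ?_ (hP0 _ _ _)
  rw [sum_mul_eq_sup'_of_sum_eq_one univ_nonempty (fun a _ => hπ0 s' a) (hπ1 s')
    fun a _ => hgreedy s' a]
  exact sum_mul_le_sup'_of_sum_eq_one univ_nonempty (fun a _ => hσ0 s' a) (hσ1 s')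

end StateAction

theorem sub_eq_of_fixedPoints {n R : Type*} [Fintype n] [CommRing R]
    {M N : Matrix n n R} {r x y : n → R} (γ : R) (z : n → R)
    (hx : r + γ • M *ᵥ x = x) (hy : r + γ • N *ᵥ y = y) :
    x - y = γ • M *ᵥ (x - y) + (γ • M - γ • N) *ᵥ (y - z) + γ • (M *ᵥ z - N *ᵥ z) := by
  conv_lhs => rw [← hx, ← hy]
  simp only [sub_mulVec, mulVec_sub, smul_mulVec, smul_sub]
  abel

theorem greedy_componentwise_recursion_general
    {S A : Type*} [Fintype S] [Fintype A] [Nonempty A]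
    (P : S → A → S → ℝ) (rew : S → A → ℝ) (γ : ℝ)
    (π πstar : S → A → ℝ) (Q Qπ Qstar : S × A → ℝ)
    (hP0 : ∀ s a s', 0 ≤ P s a s')
    (hπ0 : ∀ s a, 0 ≤ π s a) (hπ1 : ∀ s, ∑ a, π s a = 1)
    (hπstar0 : ∀ s a, 0 ≤ πstar s a) (hπstar1 : ∀ s, ∑ a, πstar s a = 1)
    (hγ0 : 0 ≤ γ)
    -- the state-action transition matrices PΠ^π and PΠ^{π*}
    (Mπ Mstar : Matrix (S × A) (S × A) ℝ)
    (hMπ : Mπ = fun p q => P p.1 p.2 q.1 * π q.1 q.2)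
    (hMstar : Mstar = fun p q => P p.1 p.2 q.1 * πstar q.1 q.2)
    -- π is greedy with respect to Q
    (hgreedy : ∀ s a, 0 < π s a →
      Q (s, a) = Finset.univ.sup' Finset.univ_nonempty fun a' => Q (s, a'))
    -- Q^π is the fixed point of 𝒯^π
    (hQπ : (fun p => rew p.1 p.2) + γ • Mπ.mulVec Qπ = Qπ)
    -- Q* is the fixed point of 𝒯^{π*} and of the Bellman optimality operator 𝒯
    (hQstar : (fun p => rew p.1 p.2) + γ • Mstar.mulVec Qstar = Qstar) :
    Qstar - Qπ ≤
      γ • Mstar.mulVec (Qstar - Qπ) +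
        (γ • Mstar - γ • Mπ).mulVec (Qπ - Q) := by
  have hgap : Mstar *ᵥ Q - Mπ *ᵥ Q ≤ 0 := by
    rw [sub_nonpos, hMπ, hMstar]
    exact stateActionMatrix_mulVec_le_of_greedy hP0 hπ0 hπ1 hπstar0 hπstar1 hgreedy
  calc Qstar - Qπ
      = γ • Mstar *ᵥ (Qstar - Qπ) + (γ • Mstar - γ • Mπ) *ᵥ (Qπ - Q)
          + γ • (Mstar *ᵥ Q - Mπ *ᵥ Q) := sub_eq_of_fixedPoints γ Q hQstar hQπ
    _ ≤ _ := add_le_of_nonpos_right (smul_nonpos_of_nonneg_of_nonpos hγ0 hgap)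

/-- If `π` is greedy w.r.t. `Q`, then component-wise
`Q* − Q^π ≤ γPΠ^{π*}(Q* − Q^π) + (γPΠ^{π*} − γPΠ^π)(Q^π − Q)`. -/
theorem greedy_componentwise_recursion
    {S A : Type*} [Fintype S] [Fintype A] [Nonempty A] [DecidableEq S] [DecidableEq A]
    (P : S → A → S → ℝ) (rew : S → A → ℝ) (γ : ℝ)
    (π πstar : S → A → ℝ) (Q Qπ Qstar : S × A → ℝ)
    (hP0 : ∀ s a s', 0 ≤ P s a s') (hP1 : ∀ s a, ∑ s', P s a s' = 1)
    (hπ0 : ∀ s a, 0 ≤ π s a) (hπ1 : ∀ s, ∑ a, π s a = 1)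
    (hπstar0 : ∀ s a, 0 ≤ πstar s a) (hπstar1 : ∀ s, ∑ a, πstar s a = 1)
    (hγ0 : 0 ≤ γ) (hγ1 : γ < 1)
    -- the state-action transition matrices PΠ^π and PΠ^{π*}
    (Mπ Mstar : Matrix (S × A) (S × A) ℝ)
    (hMπ : Mπ = fun p q => P p.1 p.2 q.1 * π q.1 q.2)
    (hMstar : Mstar = fun p q => P p.1 p.2 q.1 * πstar q.1 q.2)
    -- π is greedy with respect to Q
    (hgreedy : ∀ s a, 0 < π s a →
      Q (s, a) = Finset.univ.sup' Finset.univ_nonempty fun a' => Q (s, a'))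
    -- Q^π is the fixed point of 𝒯^π
    (hQπ : (fun p => rew p.1 p.2) + γ • Mπ.mulVec Qπ = Qπ)
    -- Q* is the fixed point of 𝒯^{π*} and of the Bellman optimality operator 𝒯
    (hQstar : (fun p => rew p.1 p.2) + γ • Mstar.mulVec Qstar = Qstar)
    (hQstarOpt : ∀ p : S × A,
      Qstar p = rew p.1 p.2 + γ * ∑ s', P p.1 p.2 s' *
        (Finset.univ.sup' Finset.univ_nonempty fun a' => Qstar (s', a'))) :
    Qstar - Qπ ≤
      γ • Mstar.mulVec (Qstar - Qπ) +
        (γ • Mstar - γ • Mπ).mulVec (Qπ - Q) :=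
  greedy_componentwise_recursion_general P rew γ π πstar Q Qπ Qstar hP0 hπ0 hπ1 hπstar0 hπstar1 hγ0
    Mπ Mstar hMπ hMstar hgreedy hQπ hQstar
end

section
/- If π is greedy with respect to Q ∈ ℝ^{|S||A|}, then component-wise Q* − Q^π ≤ [(I − γPΠ^{π*})^{-1} + (I − γPΠ^π)^{-1}] |𝒯Q − Q|, where |·| denotes the entrywise absolute value. -/
/-! For a policy `ρ` write `𝒯^ρ Q = r + γ P Π^ρ Q`. As `Q*` and `Q^π` are fixed points of `𝒯^{π*}`
and `𝒯^π`, we get `(I - γ P Π^{π*}) (Q* - Q) = 𝒯^{π*} Q - Q ≤ 𝒯 Q - Q` and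
`(I - γ P Π^π) (Q - Q^π) = Q - 𝒯^π Q = Q - 𝒯 Q`, the last because `π` is greedy for `Q`.
Both right-hand sides are at most `|𝒯 Q - Q|`, and `(I - γ P Π^ρ)⁻¹` is monotone: a substochastic
matrix `B` satisfies the maximum principle `0 ≤ (I - B) w → 0 ≤ w`. Adding the two bounds gives
the claim. -/

open Finset Matrix

namespace Matrix

variable {ι 𝕜 : Type*} [Fintype ι] [DecidableEq ι]

theorem one_sub_smul_mulVec_sub_of_fixedPoint [CommRing 𝕜] {M : Matrix ι ι 𝕜} {γ : 𝕜}
    {r V : ι → 𝕜} (hV : r + γ • M *ᵥ V = V) (Q : ι → 𝕜) :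
    (1 - γ • M) *ᵥ (V - Q) = r + γ • M *ᵥ Q - Q := by
  rw [sub_mulVec, one_mulVec, smul_mulVec, mulVec_sub, smul_sub]
  nth_rw 1 [← hV]
  abel

section OrderedField

variable [Field 𝕜] [LinearOrder 𝕜] [IsStrictOrderedRing 𝕜] {B : Matrix ι ι 𝕜}

/-- Discrete maximum principle: at a minimal entry `w i < 0`,
`(B *ᵥ w) i ≥ (∑ j, B i j) * w i > w i`. -/
theorem nonneg_of_nonneg_one_sub_mulVec (hB : ∀ i j, 0 ≤ B i j) (hrow : ∀ i, ∑ j, B i j < 1)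
    {w : ι → 𝕜} (h : 0 ≤ (1 - B) *ᵥ w) : 0 ≤ w := by
  by_contra hw
  obtain ⟨k, hk⟩ : ∃ k, w k < 0 := by simpa [Pi.le_def] using hw
  have : Nonempty ι := ⟨k⟩
  obtain ⟨i, hi⟩ := Finite.exists_min w
  have hwi : w i < 0 := (hi k).trans_lt hk
  have hBw : (∑ j, B i j) * w i ≤ (B *ᵥ w) i := by
    rw [sum_mul]
    exact sum_le_sum fun j _ => mul_le_mul_of_nonneg_left (hi j) (hB i j)
  have hres : 0 ≤ w i - (B *ᵥ w) i := by simpa [sub_mulVec] using h i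
  nlinarith [hrow i]

theorem isUnit_one_sub_of_nonneg_of_sum_row_lt_one (hB : ∀ i j, 0 ≤ B i j)
    (hrow : ∀ i, ∑ j, B i j < 1) : IsUnit (1 - B) := by
  rw [← mulVec_injective_iff_isUnit]
  intro u v huv
  have hker : ∀ x y, (1 - B) *ᵥ x = (1 - B) *ᵥ y → 0 ≤ x - y := fun x y hxy =>
    nonneg_of_nonneg_one_sub_mulVec hB hrow (by rw [mulVec_sub, hxy, sub_self])
  exact le_antisymm (sub_nonneg.1 (hker v u huv.symm)) (sub_nonneg.1 (hker u v huv))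

theorem le_inv_mulVec_of_one_sub_mulVec_le (hB : ∀ i j, 0 ≤ B i j)
    (hrow : ∀ i, ∑ j, B i j < 1) {u v : ι → 𝕜} (h : (1 - B) *ᵥ u ≤ v) :
    u ≤ (1 - B)⁻¹ *ᵥ v := by
  have hdet : IsUnit (1 - B).det :=
    (isUnit_iff_isUnit_det _).1 (isUnit_one_sub_of_nonneg_of_sum_row_lt_one hB hrow)
  rw [← sub_nonneg]
  refine nonneg_of_nonneg_one_sub_mulVec hB hrow ?_
  rwa [mulVec_sub, mulVec_mulVec, mul_nonsing_inv _ hdet, one_mulVec, sub_nonneg]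

end OrderedField

end Matrix

section PolicyAverage

variable {A : Type*} [Fintype A] [Nonempty A] {ρ : A → ℝ}

theorem sum_mul_le_sup' (hρ0 : ∀ a, 0 ≤ ρ a) (hρ1 : ∑ a, ρ a = 1) (f : A → ℝ) :
    ∑ a, ρ a * f a ≤ univ.sup' univ_nonempty f :=
  calc ∑ a, ρ a * f a ≤ ∑ a, ρ a * univ.sup' univ_nonempty f :=
        sum_le_sum fun a _ => mul_le_mul_of_nonneg_left (le_sup' f (mem_univ a)) (hρ0 a)
    _ = univ.sup' univ_nonempty f := by rw [← sum_mul, hρ1, one_mul]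

theorem sum_mul_eq_sup'_of_greedy (hρ0 : ∀ a, 0 ≤ ρ a) (hρ1 : ∑ a, ρ a = 1) {f : A → ℝ}
    (hgreedy : ∀ a, 0 < ρ a → f a = univ.sup' univ_nonempty f) :
    ∑ a, ρ a * f a = univ.sup' univ_nonempty f := by
  have hterm : ∀ a ∈ univ, ρ a * f a = ρ a * univ.sup' univ_nonempty f := fun a _ => by
    rcases (hρ0 a).eq_or_lt with h | h
    · rw [← h, zero_mul, zero_mul]
    · rw [← hgreedy a h]
  rw [sum_congr rfl hterm, ← sum_mul, hρ1, one_mul]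

end PolicyAverage

section MDP

variable {S A : Type*} [Fintype S] [Fintype A] {P : S → A → S → ℝ} {ρ : S → A → ℝ}

/-- The matrix `P Π^ρ` on state-action pairs. -/
def policyMatrix (P : S → A → S → ℝ) (ρ : S → A → ℝ) : Matrix (S × A) (S × A) ℝ :=
  fun p q => P p.1 p.2 q.1 * ρ q.1 q.2

theorem policyMatrix_mulVec (f : S × A → ℝ) (p : S × A) :
    (policyMatrix P ρ *ᵥ f) p = ∑ s', P p.1 p.2 s' * ∑ a', ρ s' a' * f (s', a') := by
  simp only [policyMatrix, mulVec, dotProduct, Fintype.sum_prod_type, mul_sum, mul_assoc]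

theorem sum_policyMatrix_row (hP1 : ∀ s a, ∑ s', P s a s' = 1) (hρ1 : ∀ s, ∑ a, ρ s a = 1)
    (p : S × A) : ∑ q, policyMatrix P ρ p q = 1 := by
  simp only [policyMatrix, Fintype.sum_prod_type, ← mul_sum, hρ1, mul_one, hP1]

theorem le_inv_mulVec_of_one_sub_smul_policyMatrix_mulVec_le [DecidableEq S] [DecidableEq A]
    (hP0 : ∀ s a s', 0 ≤ P s a s') (hP1 : ∀ s a, ∑ s', P s a s' = 1)
    (hρ0 : ∀ s a, 0 ≤ ρ s a) (hρ1 : ∀ s, ∑ a, ρ s a = 1) {γ : ℝ} (hγ0 : 0 ≤ γ) (hγ1 : γ < 1)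
    {u v : S × A → ℝ} (h : (1 - γ • policyMatrix P ρ) *ᵥ u ≤ v) :
    u ≤ (1 - γ • policyMatrix P ρ)⁻¹ *ᵥ v := by
  refine le_inv_mulVec_of_one_sub_mulVec_le (fun p q => ?_) (fun p => ?_) h
  · exact mul_nonneg hγ0 (mul_nonneg (hP0 _ _ _) (hρ0 _ _))
  · simpa only [Matrix.smul_apply, smul_eq_mul, ← mul_sum, sum_policyMatrix_row hP1 hρ1, mul_one]

variable [Nonempty A]

theorem policyMatrix_mulVec_le (hP0 : ∀ s a s', 0 ≤ P s a s') (hρ0 : ∀ s a, 0 ≤ ρ s a)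
    (hρ1 : ∀ s, ∑ a, ρ s a = 1) (Q : S × A → ℝ) (p : S × A) :
    (policyMatrix P ρ *ᵥ Q) p ≤
      ∑ s', P p.1 p.2 s' * univ.sup' univ_nonempty fun a' => Q (s', a') := by
  rw [policyMatrix_mulVec]
  exact sum_le_sum fun s' _ => mul_le_mul_of_nonneg_left
    (sum_mul_le_sup' (hρ0 s') (hρ1 s') _) (hP0 _ _ _)

theorem policyMatrix_mulVec_of_greedy (hρ0 : ∀ s a, 0 ≤ ρ s a) (hρ1 : ∀ s, ∑ a, ρ s a = 1)
    {Q : S × A → ℝ}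
    (hgreedy : ∀ s a, 0 < ρ s a → Q (s, a) = univ.sup' univ_nonempty fun a' => Q (s, a'))
    (p : S × A) : (policyMatrix P ρ *ᵥ Q) p =
      ∑ s', P p.1 p.2 s' * univ.sup' univ_nonempty fun a' => Q (s', a') := by
  simp only [policyMatrix_mulVec, sum_mul_eq_sup'_of_greedy (hρ0 _) (hρ1 _) (hgreedy _)]

end MDP

theorem lemma1_optimality_residual_bound_general
    {S A : Type*} [Fintype S] [Fintype A] [Nonempty A] [DecidableEq S] [DecidableEq A]
    (P : S → A → S → ℝ) (rew : S → A → ℝ) (γ : ℝ)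
    (π πstar : S → A → ℝ) (Q Qπ Qstar : S × A → ℝ)
    (hP0 : ∀ s a s', 0 ≤ P s a s') (hP1 : ∀ s a, ∑ s', P s a s' = 1)
    (hπ0 : ∀ s a, 0 ≤ π s a) (hπ1 : ∀ s, ∑ a, π s a = 1)
    (hπstar0 : ∀ s a, 0 ≤ πstar s a) (hπstar1 : ∀ s, ∑ a, πstar s a = 1)
    (hγ0 : 0 ≤ γ) (hγ1 : γ < 1)
    (Mπ Mstar : Matrix (S × A) (S × A) ℝ)
    (hMπ : Mπ = fun p q => P p.1 p.2 q.1 * π q.1 q.2)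
    (hMstar : Mstar = fun p q => P p.1 p.2 q.1 * πstar q.1 q.2)
    -- the Bellman optimality operator applied to Q
    (TQ : S × A → ℝ)
    (hTQ : TQ = fun p => rew p.1 p.2 + γ * ∑ s', P p.1 p.2 s' *
        (Finset.univ.sup' Finset.univ_nonempty fun a' => Q (s', a')))
    -- π is greedy with respect to Q
    (hgreedy : ∀ s a, 0 < π s a →
      Q (s, a) = Finset.univ.sup' Finset.univ_nonempty fun a' => Q (s, a'))
    -- Q^π is the fixed point of 𝒯^π
    (hQπ : (fun p => rew p.1 p.2) + γ • Mπ.mulVec Qπ = Qπ)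
    -- Q* is the fixed point of 𝒯^{π*} and of the Bellman optimality operator 𝒯
    (hQstar : (fun p => rew p.1 p.2) + γ • Mstar.mulVec Qstar = Qstar) :
    Qstar - Qπ ≤
      ((1 - γ • Mstar)⁻¹ + (1 - γ • Mπ)⁻¹).mulVec (fun p => |TQ p - Q p|) := by
  obtain rfl : Mπ = policyMatrix P π := hMπ
  obtain rfl : Mstar = policyMatrix P πstar := hMstar
  subst hTQ
  set ε : S × A → ℝ := fun p => |_ - Q p|
  have hstar : (1 - γ • policyMatrix P πstar) *ᵥ (Qstar - Q) ≤ ε := by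
    rw [one_sub_smul_mulVec_sub_of_fixedPoint hQstar]
    intro p
    refine le_trans ?_ (le_abs_self _)
    simp only [Pi.add_apply, Pi.sub_apply, Pi.smul_apply, smul_eq_mul]
    gcongr
    exact policyMatrix_mulVec_le hP0 hπstar0 hπstar1 Q p
  have hπ : (1 - γ • policyMatrix P π) *ᵥ (Q - Qπ) ≤ ε := by
    rw [← neg_sub Qπ Q, mulVec_neg, one_sub_smul_mulVec_sub_of_fixedPoint hQπ]
    intro p
    refine le_trans (le_of_eq ?_) (neg_le_abs _)
    simp only [Pi.neg_apply, Pi.add_apply, Pi.sub_apply, Pi.smul_apply, smul_eq_mul,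
      policyMatrix_mulVec_of_greedy hπ0 hπ1 hgreedy p]
  calc Qstar - Qπ = (Qstar - Q) + (Q - Qπ) := (sub_add_sub_cancel _ _ _).symm
    _ ≤ (1 - γ • policyMatrix P πstar)⁻¹ *ᵥ ε + (1 - γ • policyMatrix P π)⁻¹ *ᵥ ε := add_le_add
        (le_inv_mulVec_of_one_sub_smul_policyMatrix_mulVec_le hP0 hP1 hπstar0 hπstar1 hγ0 hγ1
          hstar)
        (le_inv_mulVec_of_one_sub_smul_policyMatrix_mulVec_le hP0 hP1 hπ0 hπ1 hγ0 hγ1 hπ)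
    _ = _ := (add_mulVec _ _ _).symm

theorem lemma1_optimality_residual_bound
    {S A : Type*} [Fintype S] [Fintype A] [Nonempty A] [DecidableEq S] [DecidableEq A]
    (P : S → A → S → ℝ) (rew : S → A → ℝ) (γ : ℝ)
    (π πstar : S → A → ℝ) (Q Qπ Qstar : S × A → ℝ)
    (hP0 : ∀ s a s', 0 ≤ P s a s') (hP1 : ∀ s a, ∑ s', P s a s' = 1)
    (hπ0 : ∀ s a, 0 ≤ π s a) (hπ1 : ∀ s, ∑ a, π s a = 1)
    (hπstar0 : ∀ s a, 0 ≤ πstar s a) (hπstar1 : ∀ s, ∑ a, πstar s a = 1)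
    (hγ0 : 0 ≤ γ) (hγ1 : γ < 1)
    (Mπ Mstar : Matrix (S × A) (S × A) ℝ)
    (hMπ : Mπ = fun p q => P p.1 p.2 q.1 * π q.1 q.2)
    (hMstar : Mstar = fun p q => P p.1 p.2 q.1 * πstar q.1 q.2)
    -- the Bellman optimality operator applied to Q
    (TQ : S × A → ℝ)
    (hTQ : TQ = fun p => rew p.1 p.2 + γ * ∑ s', P p.1 p.2 s' *
        (Finset.univ.sup' Finset.univ_nonempty fun a' => Q (s', a')))
    -- π is greedy with respect to Q
    (hgreedy : ∀ s a, 0 < π s a →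
      Q (s, a) = Finset.univ.sup' Finset.univ_nonempty fun a' => Q (s, a'))
    -- Q^π is the fixed point of 𝒯^π
    (hQπ : (fun p => rew p.1 p.2) + γ • Mπ.mulVec Qπ = Qπ)
    -- Q* is the fixed point of 𝒯^{π*} and of the Bellman optimality operator 𝒯
    (hQstar : (fun p => rew p.1 p.2) + γ • Mstar.mulVec Qstar = Qstar)
    (hQstarOpt : ∀ p : S × A,
      Qstar p = rew p.1 p.2 + γ * ∑ s', P p.1 p.2 s' *
        (Finset.univ.sup' Finset.univ_nonempty fun a' => Qstar (s', a'))) :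
    Qstar - Qπ ≤
      ((1 - γ • Mstar)⁻¹ + (1 - γ • Mπ)⁻¹).mulVec (fun p => |TQ p - Q p|) :=
  lemma1_optimality_residual_bound_general P rew γ π πstar Q Qπ Qstar hP0 hP1 hπ0 hπ1 hπstar0
    hπstar1 hγ0 hγ1 Mπ Mstar hMπ hMstar TQ hTQ hgreedy hQπ hQstar
end

section
/- Theorem 1: Let Q ∈ ℝ^{|S||A|}, π be greedy w.r.t. Q, d = νΠ^u with u the uniform policy, and suppose the concentration condition d·((1−γ)/2)A ≤ C·(μΠ^b) holds entrywise, where A = (I − γPΠ^{π*})^{-1} + (I − γPΠ^π)^{-1}. Then for any p ≥ 1: Σ_{s,a} d(s,a)|Q*(s,a) − Q^π(s,a)|^p ≤ (2/(1−γ))^p · C · Σ_{s,a} μ(s)b(a|s)|(𝒯Q)(s,a) − Q(s,a)|^p. -/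
open Finset Matrix

section aux
variable {ι : Type*} [Fintype ι] [DecidableEq ι]

lemma bmv (M : Matrix ι ι ℝ) (γ : ℝ) (y : ι → ℝ) (q : ι) :
    ((1 - γ • M) *ᵥ y) q = y q - γ * (M *ᵥ y) q := by
  rw [Matrix.sub_mulVec, Matrix.one_mulVec, Matrix.smul_mulVec]
  simp

lemma stoch_mono {M : Matrix ι ι ℝ} (hM0 : ∀ q r, 0 ≤ M q r)
    (hM1 : ∀ q, ∑ r, M q r = 1) {γ : ℝ} (hγ0 : 0 ≤ γ) (hγ1 : γ < 1)
    {y : ι → ℝ} (h : ∀ q, 0 ≤ ((1 - γ • M) *ᵥ y) q) : ∀ q, 0 ≤ y q := by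
  intro q
  obtain ⟨q0, -, hq0⟩ := Finset.exists_min_image Finset.univ y ⟨q, Finset.mem_univ q⟩
  have key : 0 ≤ y q0 := by
    have h0 := h q0
    rw [bmv] at h0
    have hsum : y q0 ≤ (M *ᵥ y) q0 := by
      have hrfl : (M *ᵥ y) q0 = ∑ r, M q0 r * y r := rfl
      rw [hrfl]
      calc y q0 = ∑ r, M q0 r * y q0 := by rw [← Finset.sum_mul, hM1, one_mul]
        _ ≤ ∑ r, M q0 r * y r := Finset.sum_le_sum fun r _ =>
            mul_le_mul_of_nonneg_left (hq0 r (Finset.mem_univ r)) (hM0 q0 r)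
    nlinarith [mul_le_mul_of_nonneg_left hsum hγ0]
  exact le_trans key (hq0 q (Finset.mem_univ q))

lemma stoch_isUnit {M : Matrix ι ι ℝ} (hM0 : ∀ q r, 0 ≤ M q r)
    (hM1 : ∀ q, ∑ r, M q r = 1) {γ : ℝ} (hγ0 : 0 ≤ γ) (hγ1 : γ < 1) :
    IsUnit (1 - γ • M).det := by
  rw [isUnit_iff_ne_zero]
  intro hdet
  obtain ⟨v, hv, hmv⟩ := Matrix.exists_mulVec_eq_zero_iff.mpr hdet
  have h1 : ∀ q, 0 ≤ v q :=
    stoch_mono hM0 hM1 hγ0 hγ1 (fun q => by rw [hmv]; exact le_refl 0)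
  have h2 : ∀ q, 0 ≤ (-v) q := by
    apply stoch_mono hM0 hM1 hγ0 hγ1
    intro q
    rw [Matrix.mulVec_neg, hmv]
    simp
  exact hv (funext fun q => le_antisymm (by simpa using h2 q) (h1 q))

lemma stoch_inv_mono {M : Matrix ι ι ℝ} (hM0 : ∀ q r, 0 ≤ M q r)
    (hM1 : ∀ q, ∑ r, M q r = 1) {γ : ℝ} (hγ0 : 0 ≤ γ) (hγ1 : γ < 1)
    {x : ι → ℝ} (hx : ∀ q, 0 ≤ x q) : ∀ q, 0 ≤ ((1 - γ • M)⁻¹ *ᵥ x) q := by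
  apply stoch_mono hM0 hM1 hγ0 hγ1
  intro q
  rw [Matrix.mulVec_mulVec, Matrix.mul_nonsing_inv _ (stoch_isUnit hM0 hM1 hγ0 hγ1),
    Matrix.one_mulVec]
  exact hx q

lemma stoch_inv_nonneg {M : Matrix ι ι ℝ} (hM0 : ∀ q r, 0 ≤ M q r)
    (hM1 : ∀ q, ∑ r, M q r = 1) {γ : ℝ} (hγ0 : 0 ≤ γ) (hγ1 : γ < 1) :
    ∀ q r, 0 ≤ (1 - γ • M)⁻¹ q r := by
  intro q r
  have h := stoch_inv_mono hM0 hM1 hγ0 hγ1 (x := Pi.single r 1)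
    (fun s => by rcases eq_or_ne s r with h | h <;> simp [Pi.single_apply, h]) q
  simpa using h

lemma stoch_inv_rowsum {M : Matrix ι ι ℝ} (hM0 : ∀ q r, 0 ≤ M q r)
    (hM1 : ∀ q, ∑ r, M q r = 1) {γ : ℝ} (hγ0 : 0 ≤ γ) (hγ1 : γ < 1) :
    ∀ q, ∑ r, (1 - γ • M)⁻¹ q r = 1 / (1 - γ) := by
  intro q
  have h1 : (1 - γ • M) *ᵥ (fun _ => (1 : ℝ)) = fun _ => (1 - γ) := by
    funext q'
    rw [bmv]
    have hrfl : (M *ᵥ fun _ => (1:ℝ)) q' = ∑ r, M q' r * 1 := rfl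
    simp [hrfl, hM1]
  have h2 : (1 - γ • M)⁻¹ *ᵥ ((1 - γ • M) *ᵥ (fun _ => (1 : ℝ))) = fun _ => (1 : ℝ) := by
    rw [Matrix.mulVec_mulVec, Matrix.nonsing_inv_mul _ (stoch_isUnit hM0 hM1 hγ0 hγ1),
      Matrix.one_mulVec]
  rw [h1] at h2
  have h4 := congrFun h2 q
  have h3 : ((1 - γ • M)⁻¹ *ᵥ fun _ => (1 - γ)) q = ∑ r, (1 - γ • M)⁻¹ q r * (1 - γ) := rfl
  rw [h3, ← Finset.sum_mul] at h4
  rw [eq_div_iff (by linarith : (1:ℝ) - γ ≠ 0)]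
  exact h4

lemma stoch_inv_le {M : Matrix ι ι ℝ} (hM0 : ∀ q r, 0 ≤ M q r)
    (hM1 : ∀ q, ∑ r, M q r = 1) {γ : ℝ} (hγ0 : 0 ≤ γ) (hγ1 : γ < 1)
    {x y : ι → ℝ} (h : ∀ q, ((1 - γ • M) *ᵥ y) q ≤ x q) :
    ∀ q, y q ≤ ((1 - γ • M)⁻¹ *ᵥ x) q := by
  intro q
  have h0 := stoch_inv_mono hM0 hM1 hγ0 hγ1
    (x := x - (1 - γ • M) *ᵥ y) (fun r => by simpa [sub_nonneg] using h r) q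
  have h1 : (1 - γ • M)⁻¹ *ᵥ (x - (1 - γ • M) *ᵥ y) = (1 - γ • M)⁻¹ *ᵥ x - y := by
    rw [Matrix.mulVec_sub, Matrix.mulVec_mulVec,
      Matrix.nonsing_inv_mul _ (stoch_isUnit hM0 hM1 hγ0 hγ1), Matrix.one_mulVec]
  rw [h1] at h0
  simpa [sub_nonneg] using h0

lemma avg_le_sup {A : Type*} [Fintype A] [Nonempty A] (w f : A → ℝ)
    (hw0 : ∀ a, 0 ≤ w a) (hw1 : ∑ a, w a = 1) :
    ∑ a, w a * f a ≤ Finset.univ.sup' Finset.univ_nonempty f := by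
  calc ∑ a, w a * f a
      ≤ ∑ a, w a * Finset.univ.sup' Finset.univ_nonempty f :=
        Finset.sum_le_sum fun a _ =>
          mul_le_mul_of_nonneg_left (Finset.le_sup' f (Finset.mem_univ a)) (hw0 a)
    _ = _ := by rw [← Finset.sum_mul, hw1, one_mul]

end aux
/-- Theorem 1: under the concentration condition,
`Σ d|Q* − Q^π|^p ≤ (2/(1−γ))^p C Σ μ(s)b(a|s)|𝒯Q − Q|^p`. -/
theorem theorem1_concentration_bound
    {S A : Type*} [Fintype S] [Fintype A] [Nonempty A] [DecidableEq S] [DecidableEq A]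
    (P : S → A → S → ℝ) (rew : S → A → ℝ) (γ : ℝ)
    (π πstar : S → A → ℝ) (Q Qπ Qstar : S × A → ℝ)
    (hP0 : ∀ s a s', 0 ≤ P s a s') (hP1 : ∀ s a, ∑ s', P s a s' = 1)
    (hπ0 : ∀ s a, 0 ≤ π s a) (hπ1 : ∀ s, ∑ a, π s a = 1)
    (hπstar0 : ∀ s a, 0 ≤ πstar s a) (hπstar1 : ∀ s, ∑ a, πstar s a = 1)
    (hγ0 : 0 ≤ γ) (hγ1 : γ < 1)
    (Mπ Mstar : Matrix (S × A) (S × A) ℝ)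
    (hMπ : Mπ = fun p q => P p.1 p.2 q.1 * π q.1 q.2)
    (hMstar : Mstar = fun p q => P p.1 p.2 q.1 * πstar q.1 q.2)
    -- the Bellman optimality operator applied to Q
    (TQ : S × A → ℝ)
    (hTQ : TQ = fun p => rew p.1 p.2 + γ * ∑ s', P p.1 p.2 s' *
        (Finset.univ.sup' Finset.univ_nonempty fun a' => Q (s', a')))
    -- π is greedy with respect to Q
    (hgreedy : ∀ s a, 0 < π s a →
      Q (s, a) = Finset.univ.sup' Finset.univ_nonempty fun a' => Q (s, a'))
    -- Q^π is the fixed point of 𝒯^π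
    (hQπ : (fun p => rew p.1 p.2) + γ • Mπ.mulVec Qπ = Qπ)
    -- Q* is the fixed point of 𝒯^{π*} and of the Bellman optimality operator 𝒯
    (hQstar : (fun p => rew p.1 p.2) + γ • Mstar.mulVec Qstar = Qstar)
    (hQstarOpt : ∀ p : S × A,
      Qstar p = rew p.1 p.2 + γ * ∑ s', P p.1 p.2 s' *
        (Finset.univ.sup' Finset.univ_nonempty fun a' => Qstar (s', a')))
    -- measures ν, μ on S, behavior policy b with full support
    (ν μ : S → ℝ) (hν0 : ∀ s, 0 ≤ ν s) (hν1 : ∑ s, ν s = 1)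
    (hμ0 : ∀ s, 0 ≤ μ s) (hμ1 : ∑ s, μ s = 1)
    (b : S → A → ℝ) (hb0 : ∀ s a, 0 < b s a) (hb1 : ∀ s, ∑ a, b s a = 1)
    -- d = νΠ^u with u the uniform policy
    (d : S × A → ℝ) (hd : d = fun p => ν p.1 / (Fintype.card A : ℝ))
    -- concentration condition: d · ((1−γ)/2)A ≤ C · μΠ^b entrywise
    (C : ℝ) (hC : 0 ≤ C)
    (hconc : ∀ q : S × A,
      Matrix.vecMul d (((1 - γ) / 2) • ((1 - γ • Mstar)⁻¹ + (1 - γ • Mπ)⁻¹)) q ≤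
        C * (μ q.1 * b q.1 q.2)) :
    ∀ p : ℝ, 1 ≤ p →
      ∑ q : S × A, d q * |Qstar q - Qπ q| ^ p ≤
        (2 / (1 - γ)) ^ p * C *
          ∑ q : S × A, μ q.1 * b q.1 q.2 * |TQ q - Q q| ^ p := by
  intro p hp
  have hγne : (1:ℝ) - γ ≠ 0 := by linarith
  have hp0 : (0:ℝ) ≤ p := le_trans zero_le_one hp
  have hc2 : (0:ℝ) ≤ 2 / (1 - γ) := div_nonneg (by norm_num) (by linarith)
  -- row-stochasticity of the policy matrices
  have hrow : ∀ (ρ : S → A → ℝ), (∀ s, ∑ a, ρ s a = 1) → ∀ q : S × A,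
      ∑ r : S × A, P q.1 q.2 r.1 * ρ r.1 r.2 = 1 := by
    intro ρ hρ q
    rw [Fintype.sum_prod_type]
    calc ∑ s', ∑ a', P q.1 q.2 s' * ρ s' a'
        = ∑ s', P q.1 q.2 s' * ∑ a', ρ s' a' :=
          Finset.sum_congr rfl fun s' _ => (Finset.mul_sum _ _ _).symm
      _ = 1 := by simp [hρ, hP1]
  have hMπ0 : ∀ q r : S × A, 0 ≤ Mπ q r := by
    intro q r; rw [hMπ]; exact mul_nonneg (hP0 _ _ _) (hπ0 _ _)
  have hMπ1 : ∀ q : S × A, ∑ r, Mπ q r = 1 := by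
    intro q; rw [hMπ]; exact hrow π hπ1 q
  have hMstar0 : ∀ q r : S × A, 0 ≤ Mstar q r := by
    intro q r; rw [hMstar]; exact mul_nonneg (hP0 _ _ _) (hπstar0 _ _)
  have hMstar1 : ∀ q : S × A, ∑ r, Mstar q r = 1 := by
    intro q; rw [hMstar]; exact hrow πstar hπstar1 q
  -- mulVec formulas
  have hMv : ∀ (ρ : S → A → ℝ) (z : S × A → ℝ) (q : S × A),
      ((fun p q : S × A => P p.1 p.2 q.1 * ρ q.1 q.2 : Matrix (S × A) (S × A) ℝ) *ᵥ z) q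
        = ∑ s', P q.1 q.2 s' * ∑ a', ρ s' a' * z (s', a') := by
    intro ρ z q
    show ∑ r : S × A, P q.1 q.2 r.1 * ρ r.1 r.2 * z r = _
    rw [Fintype.sum_prod_type]
    refine Finset.sum_congr rfl fun s' _ => ?_
    rw [Finset.mul_sum]
    exact Finset.sum_congr rfl fun a' _ => by ring
  have hMvπ : ∀ (z : S × A → ℝ) (q : S × A),
      (Mπ *ᵥ z) q = ∑ s', P q.1 q.2 s' * ∑ a', π s' a' * z (s', a') := by
    intro z q; rw [hMπ]; exact hMv π z q
  have hMvstar : ∀ (z : S × A → ℝ) (q : S × A),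
      (Mstar *ᵥ z) q = ∑ s', P q.1 q.2 s' * ∑ a', πstar s' a' * z (s', a') := by
    intro z q; rw [hMstar]; exact hMv πstar z q
  -- average bounded by sup
  have hsupz : ∀ (ρ : S → A → ℝ), (∀ s a, 0 ≤ ρ s a) → (∀ s, ∑ a, ρ s a = 1) →
      ∀ (z : S × A → ℝ) (q : S × A),
      ∑ s', P q.1 q.2 s' * ∑ a', ρ s' a' * z (s', a')
        ≤ ∑ s', P q.1 q.2 s' *
            (Finset.univ.sup' Finset.univ_nonempty fun a' => z (s', a')) := by
    intro ρ h0 h1 z q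
    refine Finset.sum_le_sum fun s' _ => mul_le_mul_of_nonneg_left ?_ (hP0 _ _ _)
    exact avg_le_sup (ρ s') (fun a' => z (s', a')) (h0 s') (h1 s')
  -- greedy policy attains the sup
  have hVQ : ∀ s, ∑ a, π s a * Q (s, a)
      = Finset.univ.sup' Finset.univ_nonempty fun a' => Q (s, a') := by
    intro s
    have hcong : ∀ a ∈ Finset.univ, π s a * Q (s, a)
        = π s a * Finset.univ.sup' Finset.univ_nonempty fun a' => Q (s, a') := by
      intro a _
      rcases (hπ0 s a).eq_or_lt with h | h
      · rw [← h, zero_mul, zero_mul]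
      · rw [hgreedy s a h]
    rw [Finset.sum_congr rfl hcong, ← Finset.sum_mul, hπ1, one_mul]
  have hTπ : ∀ q : S × A, TQ q = rew q.1 q.2 + γ * (Mπ *ᵥ Q) q := by
    intro q
    rw [hTQ, hMvπ Q q]
    simp only [hVQ]
  -- pointwise fixed-point equations
  have hQπ' : ∀ q : S × A, Qπ q = rew q.1 q.2 + γ * (Mπ *ᵥ Qπ) q := by
    intro q
    have h := congrFun hQπ q
    simpa [smul_eq_mul] using h.symm
  have hQstar' : ∀ q : S × A, Qstar q = rew q.1 q.2 + γ * (Mstar *ᵥ Qstar) q := by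
    intro q
    have h := congrFun hQstar q
    simpa [smul_eq_mul] using h.symm
  -- the three key componentwise inequalities
  have ha : ∀ q : S × A, ((1 - γ • Mstar) *ᵥ (Qstar - Q)) q ≤ |TQ q - Q q| := by
    intro q
    rw [bmv, Matrix.mulVec_sub]
    have k1 := hQstar' q
    have k2 : (Mstar *ᵥ Q) q ≤ ∑ s', P q.1 q.2 s' *
        (Finset.univ.sup' Finset.univ_nonempty fun a' => Q (s', a')) := by
      rw [hMvstar Q q]; exact hsupz πstar hπstar0 hπstar1 Q q
    have k3 : TQ q = rew q.1 q.2 + γ * ∑ s', P q.1 q.2 s' *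
        (Finset.univ.sup' Finset.univ_nonempty fun a' => Q (s', a')) := by rw [hTQ]
    have k4 : TQ q - Q q ≤ |TQ q - Q q| := le_abs_self _
    have k5 := mul_le_mul_of_nonneg_left k2 hγ0
    simp only [Pi.sub_apply]
    linarith
  have hb : ∀ q : S × A, ((1 - γ • Mπ) *ᵥ (Q - Qπ)) q ≤ |TQ q - Q q| := by
    intro q
    rw [bmv, Matrix.mulVec_sub]
    have k1 := hQπ' q
    have k2 := hTπ q
    have k4 : -(TQ q - Q q) ≤ |TQ q - Q q| := neg_le_abs _
    simp only [Pi.sub_apply]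
    linarith
  have hcineq : ∀ q : S × A, 0 ≤ ((1 - γ • Mπ) *ᵥ (Qstar - Qπ)) q := by
    intro q
    rw [bmv, Matrix.mulVec_sub]
    have k1 := hQπ' q
    have k2 : (Mπ *ᵥ Qstar) q ≤ ∑ s', P q.1 q.2 s' *
        (Finset.univ.sup' Finset.univ_nonempty fun a' => Qstar (s', a')) := by
      rw [hMvπ Qstar q]; exact hsupz π hπ0 hπ1 Qstar q
    have k3 := hQstarOpt q
    have k5 := mul_le_mul_of_nonneg_left k2 hγ0
    simp only [Pi.sub_apply]
    linarith
  -- abbreviations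
  obtain ⟨ε, hεdef⟩ : ∃ ε : S × A → ℝ, ε = fun q => |TQ q - Q q| := ⟨_, rfl⟩
  have hε0 : ∀ q, 0 ≤ ε q := fun q => by rw [hεdef]; exact abs_nonneg _
  have hεa : ∀ q, ε q = |TQ q - Q q| := fun q => by rw [hεdef]
  have h3 : ∀ q : S × A, 0 ≤ Qstar q - Qπ q := by
    intro q
    have h := stoch_mono hMπ0 hMπ1 hγ0 hγ1 hcineq q
    simpa using h
  have h1 : ∀ q : S × A, Qstar q - Q q ≤ ((1 - γ • Mstar)⁻¹ *ᵥ ε) q := by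
    intro q
    have h := stoch_inv_le hMstar0 hMstar1 hγ0 hγ1 (x := ε) (y := Qstar - Q)
      (fun r => by rw [hεa r]; exact ha r) q
    simpa using h
  have h2 : ∀ q : S × A, Q q - Qπ q ≤ ((1 - γ • Mπ)⁻¹ *ᵥ ε) q := by
    intro q
    have h := stoch_inv_le hMπ0 hMπ1 hγ0 hγ1 (x := ε) (y := Q - Qπ)
      (fun r => by rw [hεa r]; exact hb r) q
    simpa using h
  obtain ⟨W, hWdef⟩ : ∃ W : S × A → S × A → ℝ,
      W = fun q r => ((1 - γ) / 2) * ((1 - γ • Mstar)⁻¹ q r + (1 - γ • Mπ)⁻¹ q r) :=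
    ⟨_, rfl⟩
  have hWa : ∀ q r, W q r
      = ((1 - γ) / 2) * ((1 - γ • Mstar)⁻¹ q r + (1 - γ • Mπ)⁻¹ q r) := fun q r => by
    rw [hWdef]
  have hNs0 := stoch_inv_nonneg hMstar0 hMstar1 hγ0 hγ1
  have hNp0 := stoch_inv_nonneg hMπ0 hMπ1 hγ0 hγ1
  have hNs1 := stoch_inv_rowsum hMstar0 hMstar1 hγ0 hγ1
  have hNp1 := stoch_inv_rowsum hMπ0 hMπ1 hγ0 hγ1
  have hW0 : ∀ q r, 0 ≤ W q r := fun q r => by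
    rw [hWa]
    exact mul_nonneg (by linarith) (add_nonneg (hNs0 q r) (hNp0 q r))
  have hW1 : ∀ q, ∑ r, W q r = 1 := by
    intro q
    have e : ∑ r, W q r = ((1 - γ) / 2) * (1 / (1 - γ) + 1 / (1 - γ)) := by
      calc ∑ r, W q r
          = ∑ r, ((1 - γ) / 2) * ((1 - γ • Mstar)⁻¹ q r + (1 - γ • Mπ)⁻¹ q r) :=
            Finset.sum_congr rfl fun r _ => hWa q r
        _ = ((1 - γ) / 2) * ∑ r, ((1 - γ • Mstar)⁻¹ q r + (1 - γ • Mπ)⁻¹ q r) :=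
            (Finset.mul_sum _ _ _).symm
        _ = ((1 - γ) / 2) * (∑ r, (1 - γ • Mstar)⁻¹ q r + ∑ r, (1 - γ • Mπ)⁻¹ q r) := by
            rw [Finset.sum_add_distrib]
        _ = _ := by rw [hNs1 q, hNp1 q]
    rw [e]
    field_simp
    ring
  have hmv_sum : ∀ (N : Matrix (S × A) (S × A) ℝ) (z : S × A → ℝ) (q : S × A),
      (N *ᵥ z) q = ∑ r, N q r * z r := fun N z q => rfl
  -- pointwise bound |Q* - Qπ| ≤ (2/(1-γ)) Σ W ε
  have step1 : ∀ q, |Qstar q - Qπ q| ≤ (2 / (1 - γ)) * ∑ r, W q r * ε r := by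
    intro q
    rw [abs_of_nonneg (h3 q)]
    have e1 : (2 / (1 - γ)) * ∑ r, W q r * ε r
        = ∑ r, ((1 - γ • Mstar)⁻¹ q r + (1 - γ • Mπ)⁻¹ q r) * ε r := by
      rw [Finset.mul_sum]
      refine Finset.sum_congr rfl fun r _ => ?_
      rw [hWa]
      field_simp
      try ring
    have e2 : ∑ r, ((1 - γ • Mstar)⁻¹ q r + (1 - γ • Mπ)⁻¹ q r) * ε r
        = ((1 - γ • Mstar)⁻¹ *ᵥ ε) q + ((1 - γ • Mπ)⁻¹ *ᵥ ε) q := by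
      rw [hmv_sum, hmv_sum, ← Finset.sum_add_distrib]
      exact Finset.sum_congr rfl fun r _ => by ring
    rw [e1, e2]
    linarith [h1 q, h2 q]
  -- Jensen
  have jensen : ∀ q, (∑ r, W q r * ε r) ^ p ≤ ∑ r, W q r * ε r ^ p := by
    intro q
    have h := (convexOn_rpow hp).map_sum_le
      (fun r (_ : r ∈ Finset.univ) => hW0 q r) (hW1 q)
      (fun r _ => Set.mem_Ici.mpr (hε0 r))
    simpa [smul_eq_mul] using h
  have step3 : ∀ q, |Qstar q - Qπ q| ^ p ≤ (2 / (1 - γ)) ^ p * ∑ r, W q r * ε r ^ p := by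
    intro q
    have hsn : 0 ≤ ∑ r, W q r * ε r :=
      Finset.sum_nonneg fun r _ => mul_nonneg (hW0 q r) (hε0 r)
    have h := Real.rpow_le_rpow (abs_nonneg _) (step1 q) hp0
    rw [Real.mul_rpow hc2 hsn] at h
    exact h.trans (mul_le_mul_of_nonneg_left (jensen q) (Real.rpow_nonneg hc2 p))
  have hd0 : ∀ q : S × A, 0 ≤ d q := by
    intro q; rw [hd]; exact div_nonneg (hν0 q.1) (Nat.cast_nonneg _)
  -- change of measure via the concentration condition
  have hvm : ∀ r : S × A, ∑ q, d q * W q r ≤ C * (μ r.1 * b r.1 r.2) := by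
    intro r
    have h := hconc r
    have heq : Matrix.vecMul d (((1 - γ) / 2) • ((1 - γ • Mstar)⁻¹ + (1 - γ • Mπ)⁻¹)) r
        = ∑ q, d q * W q r := by
      show ∑ q, d q * (((1 - γ) / 2) • ((1 - γ • Mstar)⁻¹ + (1 - γ • Mπ)⁻¹)) q r = _
      refine Finset.sum_congr rfl fun q _ => ?_
      rw [hWa]
      simp [Matrix.smul_apply, Matrix.add_apply, smul_eq_mul]
    rw [heq] at h
    exact h
  -- put everything together
  have habsε : ∀ q : S × A, |TQ q - Q q| ^ p = ε q ^ p := fun q => by rw [hεa]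
  calc ∑ q : S × A, d q * |Qstar q - Qπ q| ^ p
      ≤ ∑ q : S × A, d q * ((2 / (1 - γ)) ^ p * ∑ r, W q r * ε r ^ p) :=
        Finset.sum_le_sum fun q _ => mul_le_mul_of_nonneg_left (step3 q) (hd0 q)
    _ = ∑ q : S × A, ∑ r, (2 / (1 - γ)) ^ p * (d q * W q r * ε r ^ p) := by
        refine Finset.sum_congr rfl fun q _ => ?_
        rw [Finset.mul_sum, Finset.mul_sum]
        exact Finset.sum_congr rfl fun r _ => by ring
    _ = ∑ r, ∑ q, (2 / (1 - γ)) ^ p * (d q * W q r * ε r ^ p) := Finset.sum_comm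
    _ = ∑ r, (2 / (1 - γ)) ^ p * ((∑ q, d q * W q r) * ε r ^ p) := by
        refine Finset.sum_congr rfl fun r _ => ?_
        rw [Finset.sum_mul, Finset.mul_sum]
    _ ≤ ∑ r, (2 / (1 - γ)) ^ p * (C * (μ r.1 * b r.1 r.2) * ε r ^ p) := by
        refine Finset.sum_le_sum fun r _ => ?_
        refine mul_le_mul_of_nonneg_left ?_ (Real.rpow_nonneg hc2 p)
        exact mul_le_mul_of_nonneg_right (hvm r) (Real.rpow_nonneg (hε0 r) p)
    _ = (2 / (1 - γ)) ^ p * C * ∑ q : S × A, μ q.1 * b q.1 q.2 * |TQ q - Q q| ^ p := by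
        rw [Finset.mul_sum]
        refine Finset.sum_congr rfl fun q _ => ?_
        rw [habsε q]
        ring
end

section
/- If π is greedy w.r.t. Q, then Q* − Q^π ≤ (I − γPΠ^{π*})^{-1}(γPΠ^{π*} − γPΠ^π)(I − γPΠ^π)^{-1}(𝒯Q − Q) component-wise. -/
open Finset

section AuxResolvent
variable {n : Type*} [Fintype n] [DecidableEq n]

attribute [local instance] Matrix.linftyOpNormedAddCommGroup Matrix.linftyOpNormedRing
  Matrix.linftyOpNormedSpace Matrix.linftyOpIsBoundedSMul

lemma aux_norm_le_one (M : Matrix n n ℝ) (hM : ∀ i j, 0 ≤ M i j)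
    (hrow : ∀ i, ∑ j, M i j = 1) : ‖M‖ ≤ 1 := by
  rw [Matrix.linfty_opNorm_def]
  have : ((Finset.univ : Finset n).sup fun i : n => ∑ j : n, ‖M i j‖₊) ≤ 1 := by
    apply Finset.sup_le
    intro i _
    rw [← NNReal.coe_le_coe]
    push_cast
    have heq : (∑ j, ‖M i j‖) = ∑ j, M i j := by
      apply Finset.sum_congr rfl
      intro j _
      rw [Real.norm_eq_abs, abs_of_nonneg (hM i j)]
    rw [heq, hrow i]
  exact_mod_cast this

lemma aux_resolvent (M : Matrix n n ℝ) (hM : ∀ i j, 0 ≤ M i j)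
    (hrow : ∀ i, ∑ j, M i j = 1) {γ : ℝ} (hγ0 : 0 ≤ γ) (hγ1 : γ < 1) :
    (1 - γ • M)⁻¹ * (1 - γ • M) = 1 ∧ ∀ i j, 0 ≤ (1 - γ • M)⁻¹ i j := by
  have hnorm : ‖γ • M‖ < 1 := by
    have h1 : ‖γ • M‖ = γ * ‖M‖ := by
      rw [norm_smul, Real.norm_eq_abs, abs_of_nonneg hγ0]
    have h2 : γ * ‖M‖ ≤ γ * 1 :=
      mul_le_mul_of_nonneg_left (aux_norm_le_one M hM hrow) hγ0
    rw [h1]; linarith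
  have hunit : IsUnit (1 - γ • M) := isUnit_one_sub_of_norm_lt_one hnorm
  have hinv : (1 - γ • M)⁻¹ = Ring.inverse (1 - γ • M) :=
    Matrix.nonsing_inv_eq_ringInverse _
  constructor
  · rw [hinv]; exact Ring.inverse_mul_cancel _ hunit
  · have hpow : ∀ (k : ℕ) (a b : n), 0 ≤ ((γ • M) ^ k) a b := by
      have hsm : ∀ (a b : n), 0 ≤ (γ • M) a b := fun a b =>
        mul_nonneg hγ0 (hM a b)
      intro k
      induction k with
      | zero =>
        intro a b
        simp only [pow_zero, Matrix.one_apply]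
        split <;> norm_num
      | succ m ih =>
        intro a b
        rw [pow_succ, Matrix.mul_apply]
        exact Finset.sum_nonneg fun l _ => mul_nonneg (ih a l) (hsm l b)
    intro i j
    have hs : HasSum (fun k : ℕ => (γ • M) ^ k) (Ring.inverse (1 - γ • M)) :=
      hasSum_geom_series_inverse _ hnorm
    let e : Matrix n n ℝ →ₗ[ℝ] ℝ :=
      { toFun := fun A => A i j
        map_add' := fun A B => rfl
        map_smul' := fun c A => rfl }
    have he : Continuous e := e.continuous_of_finiteDimensional
    have hs' : HasSum (fun k : ℕ => ((γ • M) ^ k) i j) (Ring.inverse (1 - γ • M) i j) :=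
      hs.map e.toAddMonoidHom he
    rw [hinv, ← hs'.tsum_eq]
    exact tsum_nonneg fun k => hpow k i j

lemma aux_mulVec_mono (A : Matrix n n ℝ) (hA : ∀ i j, 0 ≤ A i j) {x y : n → ℝ}
    (h : x ≤ y) : A.mulVec x ≤ A.mulVec y := by
  intro i
  simp only [Matrix.mulVec, dotProduct]
  exact Finset.sum_le_sum fun j _ => mul_le_mul_of_nonneg_left (h j) (hA i j)

end AuxResolvent

theorem greedy_intermediate_resolvent_inequality
    {S A : Type*} [Fintype S] [Fintype A] [Nonempty A] [DecidableEq S] [DecidableEq A]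
    (P : S → A → S → ℝ) (rew : S → A → ℝ) (γ : ℝ)
    (π πstar : S → A → ℝ) (Q Qπ Qstar : S × A → ℝ)
    (hP0 : ∀ s a s', 0 ≤ P s a s') (hP1 : ∀ s a, ∑ s', P s a s' = 1)
    (hπ0 : ∀ s a, 0 ≤ π s a) (hπ1 : ∀ s, ∑ a, π s a = 1)
    (hπstar0 : ∀ s a, 0 ≤ πstar s a) (hπstar1 : ∀ s, ∑ a, πstar s a = 1)
    (hγ0 : 0 ≤ γ) (hγ1 : γ < 1)
    (Mπ Mstar : Matrix (S × A) (S × A) ℝ)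
    (hMπ : Mπ = fun p q => P p.1 p.2 q.1 * π q.1 q.2)
    (hMstar : Mstar = fun p q => P p.1 p.2 q.1 * πstar q.1 q.2)
    -- the Bellman optimality operator applied to Q
    (TQ : S × A → ℝ)
    (hTQ : TQ = fun p => rew p.1 p.2 + γ * ∑ s', P p.1 p.2 s' *
        (Finset.univ.sup' Finset.univ_nonempty fun a' => Q (s', a')))
    -- π is greedy with respect to Q
    (hgreedy : ∀ s a, 0 < π s a →
      Q (s, a) = Finset.univ.sup' Finset.univ_nonempty fun a' => Q (s, a'))
    -- Q^π is the fixed point of 𝒯^π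
    (hQπ : (fun p => rew p.1 p.2) + γ • Mπ.mulVec Qπ = Qπ)
    -- Q* is the fixed point of 𝒯^{π*} and of the Bellman optimality operator 𝒯
    (hQstar : (fun p => rew p.1 p.2) + γ • Mstar.mulVec Qstar = Qstar)
    (hQstarOpt : ∀ p : S × A,
      Qstar p = rew p.1 p.2 + γ * ∑ s', P p.1 p.2 s' *
        (Finset.univ.sup' Finset.univ_nonempty fun a' => Qstar (s', a'))) :
    Qstar - Qπ ≤
      ((1 - γ • Mstar)⁻¹ * (γ • Mstar - γ • Mπ) * (1 - γ • Mπ)⁻¹).mulVec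
        (TQ - Q) := by
  classical
  set r : S × A → ℝ := fun p => rew p.1 p.2 with hr
  -- basic facts about the stochastic matrices
  have hMπ0 : ∀ p q, 0 ≤ Mπ p q := by
    intro p q; rw [hMπ]; exact mul_nonneg (hP0 _ _ _) (hπ0 _ _)
  have hMstar0 : ∀ p q, 0 ≤ Mstar p q := by
    intro p q; rw [hMstar]; exact mul_nonneg (hP0 _ _ _) (hπstar0 _ _)
  have hMπrow : ∀ p, ∑ q, Mπ p q = 1 := by
    intro p
    rw [hMπ]
    rw [Fintype.sum_prod_type]
    have : ∀ s' : S, ∑ a' : A, P p.1 p.2 s' * π s' a' = P p.1 p.2 s' := by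
      intro s'; rw [← Finset.mul_sum, hπ1, mul_one]
    simp only [this]
    exact hP1 p.1 p.2
  have hMstarrow : ∀ p, ∑ q, Mstar p q = 1 := by
    intro p
    rw [hMstar]
    rw [Fintype.sum_prod_type]
    have : ∀ s' : S, ∑ a' : A, P p.1 p.2 s' * πstar s' a' = P p.1 p.2 s' := by
      intro s'; rw [← Finset.mul_sum, hπstar1, mul_one]
    simp only [this]
    exact hP1 p.1 p.2
  -- greedy: π averages to the max of Q
  have hg : ∀ s : S, (∑ a : A, π s a * Q (s, a)) =
      Finset.univ.sup' Finset.univ_nonempty fun a' => Q (s, a') := by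
    intro s
    have hcongr : ∀ a ∈ (Finset.univ : Finset A), π s a * Q (s, a) =
        π s a * (Finset.univ.sup' Finset.univ_nonempty fun a' => Q (s, a')) := by
      intro a _
      rcases eq_or_lt_of_le (hπ0 s a) with h | h
      · rw [← h, zero_mul, zero_mul]
      · rw [hgreedy s a h]
    rw [Finset.sum_congr rfl hcongr, ← Finset.sum_mul, hπ1, one_mul]
  -- Mπ applied to Q gives the maxima
  have hMπQ : Mπ.mulVec Q = fun p => ∑ s', P p.1 p.2 s' *
      (Finset.univ.sup' Finset.univ_nonempty fun a' => Q (s', a')) := by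
    funext p
    rw [hMπ]
    simp only [Matrix.mulVec, dotProduct]
    rw [Fintype.sum_prod_type]
    apply Finset.sum_congr rfl
    intro s' _
    rw [← hg s', Finset.mul_sum]
    apply Finset.sum_congr rfl
    intro a' _
    ring
  -- TQ is the Bellman operator of π applied to Q
  have hTQ' : TQ = r + γ • Mπ.mulVec Q := by
    funext p
    rw [hTQ, hMπQ]
    simp [hr]
  -- Mstar applied to Q is dominated by the maxima
  have hMle : Mstar.mulVec Q ≤ Mπ.mulVec Q := by
    intro p
    rw [hMπQ]
    rw [hMstar]
    simp only [Matrix.mulVec, dotProduct]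
    rw [Fintype.sum_prod_type]
    apply Finset.sum_le_sum
    intro s' _
    have h1 : (∑ a' : A, P p.1 p.2 s' * πstar s' a' * Q (s', a')) =
        P p.1 p.2 s' * ∑ a' : A, πstar s' a' * Q (s', a') := by
      rw [Finset.mul_sum]
      apply Finset.sum_congr rfl
      intro a' _
      ring
    rw [h1]
    apply mul_le_mul_of_nonneg_left _ (hP0 _ _ _)
    calc (∑ a' : A, πstar s' a' * Q (s', a'))
        ≤ ∑ a' : A, πstar s' a' *
            (Finset.univ.sup' Finset.univ_nonempty fun a'' => Q (s', a'')) := by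
          apply Finset.sum_le_sum
          intro a' _
          exact mul_le_mul_of_nonneg_left
            (Finset.le_sup' (fun a'' => Q (s', a'')) (Finset.mem_univ a'))
            (hπstar0 s' a')
      _ = _ := by rw [← Finset.sum_mul, hπstar1, one_mul]
  -- fixed point rearrangements
  have hfpπ : γ • Mπ.mulVec Qπ = Qπ - r := by
    rw [eq_sub_iff_add_eq, add_comm]; exact hQπ
  have hfps : γ • Mstar.mulVec Qstar = Qstar - r := by
    rw [eq_sub_iff_add_eq, add_comm]; exact hQstar
  -- step C : (1 - γMπ) (Qπ - Q) = TQ - Q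
  have hC : (1 - γ • Mπ).mulVec (Qπ - Q) = TQ - Q := by
    rw [Matrix.sub_mulVec, Matrix.one_mulVec, Matrix.smul_mulVec,
      Matrix.mulVec_sub, smul_sub, hfpπ, hTQ']
    abel
  -- step D : (1 - γMstar) (Qstar - Qπ) ≤ (γMstar - γMπ) (Qπ - Q)
  have hD : (1 - γ • Mstar).mulVec (Qstar - Qπ) ≤
      (γ • Mstar - γ • Mπ).mulVec (Qπ - Q) := by
    rw [← sub_nonneg]
    have hEq : (γ • Mstar - γ • Mπ).mulVec (Qπ - Q) -
        (1 - γ • Mstar).mulVec (Qstar - Qπ) =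
        γ • (Mπ.mulVec Q - Mstar.mulVec Q) := by
      rw [Matrix.sub_mulVec, Matrix.sub_mulVec, Matrix.one_mulVec,
        Matrix.smul_mulVec, Matrix.smul_mulVec, Matrix.smul_mulVec,
        Matrix.mulVec_sub, Matrix.mulVec_sub, Matrix.mulVec_sub,
        smul_sub, smul_sub, smul_sub, hfpπ, hfps, smul_sub]
      abel
    rw [hEq]
    intro p
    simp only [Pi.smul_apply, Pi.sub_apply, Pi.zero_apply, smul_eq_mul]
    exact mul_nonneg hγ0 (sub_nonneg.mpr (hMle p))
  -- resolvent facts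
  obtain ⟨hLπ, hNπ⟩ := aux_resolvent Mπ hMπ0 hMπrow hγ0 hγ1
  obtain ⟨hLs, hNs⟩ := aux_resolvent Mstar hMstar0 hMstarrow hγ0 hγ1
  -- step F : Qπ - Q = (1 - γMπ)⁻¹ (TQ - Q)
  have hF : Qπ - Q = (1 - γ • Mπ)⁻¹.mulVec (TQ - Q) := by
    rw [← hC, Matrix.mulVec_mulVec, hLπ, Matrix.one_mulVec]
  -- conclusion
  calc Qstar - Qπ
      = ((1 - γ • Mstar)⁻¹ * (1 - γ • Mstar)).mulVec (Qstar - Qπ) := by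
        rw [hLs, Matrix.one_mulVec]
    _ = (1 - γ • Mstar)⁻¹.mulVec ((1 - γ • Mstar).mulVec (Qstar - Qπ)) := by
        rw [Matrix.mulVec_mulVec]
    _ ≤ (1 - γ • Mstar)⁻¹.mulVec ((γ • Mstar - γ • Mπ).mulVec (Qπ - Q)) :=
        aux_mulVec_mono _ hNs hD
    _ = (1 - γ • Mstar)⁻¹.mulVec ((γ • Mstar - γ • Mπ).mulVec
          ((1 - γ • Mπ)⁻¹.mulVec (TQ - Q))) := by rw [← hF]
    _ = ((1 - γ • Mstar)⁻¹ * (γ • Mstar - γ • Mπ) * (1 - γ • Mπ)⁻¹).mulVec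
          (TQ - Q) := by rw [Matrix.mulVec_mulVec, Matrix.mulVec_mulVec]
end
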